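/- arXiv:1804.04730 — 2 statements merged into one kernel-verified Lean document; each statement's English description precedes it below -/
import Mathlib

section
/- Let ν, θ : Fin d → ℂ be unit vectors such that |⟨θ,ν⟩|² ≥ 1 − ε for some ε ∈ [0,1], let α > 0 be real, let n ≥ 1, and let r be a natural number with (ε+α)·n ≤ r ≤ n. Then the trace Tr(P^{r,ν} · Θ), where Θ = θ^{⊗n}(θ^{⊗n})†, is a real number satisfying Tr(P^{r,ν} · Θ) ≥ 1 − exp(−2α²n). -/
open Matrix ComplexOrder

/-- Rank-one matrix `v v†`. -/
noncomputable def outer {ι : Type} (v : ι → ℂ) : Matrix ι ι ℂ :=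
  Matrix.vecMulVec v (star v)

/-- Tensor power of a single-subsystem vector. -/
noncomputable def tensorPow {ι : Type} (n : ℕ) (v : ι → ℂ) : (Fin n → ι) → ℂ :=
  fun x => ∏ i, v (x i)

/-- Hamming-ball projector of radius `r` around `ν^{⊗n}`. -/
noncomputable def hammProj {ι : Type} [Fintype ι] [DecidableEq ι] (n r : ℕ) (ν : ι → ℂ) :
    Matrix (Fin n → ι) (Fin n → ι) ℂ :=
  ∑ E ∈ Finset.univ.filter (fun E : Finset (Fin n) => E.card ≤ r),
    Matrix.of fun x y =>
      ∏ i, (if i ∈ E then (1 - outer ν) else outer ν) (x i) (y i)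

/-!
Each term of `P^{r,ν}` is a tensor product, so its trace against `θ^{⊗n}(θ^{⊗n})†` factorises
over the subsystems into `q = |⟨θ,ν⟩|²` for `i ∉ E` and `1 - q` for `i ∈ E`. Hence
`Tr(P^{r,ν} Θ)` is the probability that a binomial variable with parameters `n` and
`p = 1 - q ≤ ε` is at most `r ≥ (p + α) n`, and the Chernoff bound with Hoeffding's lemma
`1 - p + p eᵗ ≤ exp (p t + t² / 8)` shows that the upper tail is at most `exp (-2 α² n)`.
-/

open Finset

lemma normSq_star_dotProduct_le {ι : Type*} [Fintype ι] (θ ν : ι → ℂ) :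
    Complex.normSq (star θ ⬝ᵥ ν) ≤ (∑ i, Complex.normSq (θ i)) * ∑ i, Complex.normSq (ν i) := by
  have hCS := norm_inner_le_norm (𝕜 := ℂ) (WithLp.toLp 2 θ) (WithLp.toLp 2 ν)
  rw [EuclideanSpace.inner_toLp_toLp, dotProduct_comm] at hCS
  have hnorm (v : ι → ℂ) : ‖WithLp.toLp 2 v‖ ^ 2 = ∑ i, Complex.normSq (v i) := by
    simp [EuclideanSpace.norm_sq_eq, Complex.sq_norm]
  rw [← hnorm, ← hnorm, ← mul_pow, ← Complex.sq_norm]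
  gcongr

lemma prod_ite_mem_eq_pow_mul_pow {n : ℕ} {R : Type*} [CommMonoid R] (E : Finset (Fin n))
    (a b : R) :
    ∏ i, (if i ∈ E then a else b) = a ^ #E * b ^ (n - #E) := by
  rw [prod_ite, prod_const, prod_const, filter_mem_eq_inter, univ_inter, filter_not,
    filter_mem_eq_inter, univ_inter, ← compl_eq_univ_sdiff, card_compl, Fintype.card_fin]

lemma trace_outer {ι : Type} [Fintype ι] (v : ι → ℂ) :
    trace (outer v) = ∑ i, (Complex.normSq (v i) : ℂ) := by
  simp [outer, dotProduct, Complex.mul_conj]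

lemma trace_outer_mul_outer {ι : Type} [Fintype ι] (ν θ : ι → ℂ) :
    trace (outer ν * outer θ) = Complex.normSq (star θ ⬝ᵥ ν) := by
  rw [outer, outer, vecMulVec_mul_vecMulVec, trace_vecMulVec, dotProduct_smul, smul_eq_mul,
    star_dotProduct, dotProduct_comm ν, Complex.normSq_eq_conj_mul_self, Complex.star_def]

lemma trace_tensor_mul_outer_tensorPow {ι : Type} [Fintype ι] {n : ℕ}
    (M : Fin n → Matrix ι ι ℂ) (v : ι → ℂ) :
    trace (of (fun x y => ∏ i, M i (x i) (y i)) * outer (tensorPow n v)) =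
      ∏ i, trace (M i * outer v) := by
  simp only [Matrix.trace, Matrix.diag_apply, mul_apply, of_apply, outer, vecMulVec_apply,
    tensorPow, Pi.star_apply, star_prod, ← prod_mul_distrib, Fintype.prod_sum]

lemma trace_hammProj_mul_outer_tensorPow {ι : Type} [Fintype ι] [DecidableEq ι] (n r : ℕ)
    (ν θ : ι → ℂ) (hθ : ∑ i, Complex.normSq (θ i) = 1) :
    trace (hammProj n r ν * outer (tensorPow n θ)) =
      ((∑ E : Finset (Fin n) with #E ≤ r, (1 - Complex.normSq (star θ ⬝ᵥ ν)) ^ #E *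
        Complex.normSq (star θ ⬝ᵥ ν) ^ (n - #E) : ℝ) : ℂ) := by
  have hfactor (E : Finset (Fin n)) (i : Fin n) :
      trace ((if i ∈ E then 1 - outer ν else outer ν) * outer θ) =
        if i ∈ E then 1 - (Complex.normSq (star θ ⬝ᵥ ν) : ℂ)
        else Complex.normSq (star θ ⬝ᵥ ν) := by
    split_ifs
    · rw [sub_mul, one_mul, trace_sub, trace_outer, trace_outer_mul_outer, ← Complex.ofReal_sum,
        hθ, Complex.ofReal_one]
    · exact trace_outer_mul_outer ν θ
  rw [hammProj, sum_mul, trace_sum]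
  push_cast
  refine sum_congr rfl fun E _ => ?_
  simp only [trace_tensor_mul_outer_tensorPow, hfactor, prod_ite_mem_eq_pow_mul_pow]

open ProbabilityTheory MeasureTheory in
lemma one_sub_add_mul_exp_le {p : ℝ} (hp0 : 0 ≤ p) (hp1 : p ≤ 1) (t : ℝ) :
    1 - p + p * Real.exp t ≤ Real.exp (p * t + t ^ 2 / 8) := by
  -- Hoeffding's lemma for the centred Bernoulli(p) variable, then multiply through by `exp (p t)`.
  let X : Bool → ℝ := fun b => if b then 1 else 0
  have hmgf := (hasSubgaussianMGF_of_mem_Icc (a := 0) (b := 1)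
    (μ := bernoulliMeasure true false ⟨p, hp0, hp1⟩) (Measurable.of_discrete (f := X)).aemeasurable
    (ae_of_all _ fun b => by cases b <;> simp [X])).mgf_le t
  simp only [mgf, X, integral_bernoulliMeasure] at hmgf
  norm_num at hmgf
  calc 1 - p + p * Real.exp t
      = Real.exp (p * t) * (p * Real.exp (t * (1 - p)) + (1 - p) * Real.exp (-(t * p))) := by
        rw [mul_add, mul_left_comm, mul_left_comm _ (1 - p), ← Real.exp_add, ← Real.exp_add]
        ring_nf; rw [Real.exp_zero]; ring
    _ ≤ Real.exp (p * t) * Real.exp (t ^ 2 / 8) := by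
        gcongr
        exact hmgf.trans_eq (by congr 1; ring)
    _ = Real.exp (p * t + t ^ 2 / 8) := (Real.exp_add _ _).symm

lemma sum_card_gt_pow_mul_pow_le {n r : ℕ} {p α : ℝ} (hp0 : 0 ≤ p) (hp1 : p ≤ 1) (hα : 0 ≤ α)
    (hr : (p + α) * n ≤ r) :
    ∑ E : Finset (Fin n) with r < #E, p ^ #E * (1 - p) ^ (n - #E) ≤
      Real.exp (-2 * α ^ 2 * n) := by
  -- `t = 4α` minimises the Chernoff exponent `n (p t + t² / 8) - t (p + α) n`.
  set t := 4 * α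
  have ht0 : 0 ≤ t := by positivity
  have chernoff : Real.exp (t * r) * ∑ E : Finset (Fin n) with r < #E,
      p ^ #E * (1 - p) ^ (n - #E) ≤ (1 - p + p * Real.exp t) ^ n :=
    calc _ = ∑ E : Finset (Fin n) with r < #E, Real.exp (t * r) * (p ^ #E * (1 - p) ^ (n - #E)) :=
          mul_sum _ _ _
      _ ≤ ∑ E : Finset (Fin n) with r < #E, (p * Real.exp t) ^ #E * (1 - p) ^ (n - #E) := by
          refine sum_le_sum fun E hE => ?_
          have hrE : (r : ℝ) ≤ #E := by exact_mod_cast (mem_filter.1 hE).2.le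
          have hexp : Real.exp (t * r) ≤ Real.exp t ^ #E := by
            rw [← Real.exp_nat_mul, mul_comm]
            gcongr
          calc _ ≤ Real.exp t ^ #E * (p ^ #E * (1 - p) ^ (n - #E)) := by
                gcongr
            _ = _ := by ring
      _ ≤ ∑ E : Finset (Fin n), (p * Real.exp t) ^ #E * (1 - p) ^ (n - #E) :=
          sum_le_sum_of_subset_of_nonneg (filter_subset _ _) fun _ _ _ =>
            mul_nonneg (by positivity) (pow_nonneg (by linarith) _)
      _ = _ := by rw [Fin.sum_pow_mul_eq_add_pow, add_comm]
  have hoeffding : (1 - p + p * Real.exp t) ^ n ≤ Real.exp (n * (p * t + t ^ 2 / 8)) := by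
    rw [Real.exp_nat_mul]
    exact pow_le_pow_left₀ (by nlinarith [Real.exp_pos t]) (one_sub_add_mul_exp_le hp0 hp1 t) n
  calc _ ≤ Real.exp (n * (p * t + t ^ 2 / 8)) / Real.exp (t * r) :=
        (le_div_iff₀' (Real.exp_pos _)).2 (chernoff.trans hoeffding)
    _ = Real.exp (n * (p * t + t ^ 2 / 8) - t * r) := (Real.exp_sub _ _).symm
    _ ≤ _ := Real.exp_le_exp.2 (by nlinarith [mul_le_mul_of_nonneg_left hr ht0])

lemma one_sub_exp_le_sum_card_le_pow_mul_pow {n r : ℕ} {p α : ℝ} (hp0 : 0 ≤ p) (hp1 : p ≤ 1)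
    (hα : 0 ≤ α) (hr : (p + α) * n ≤ r) :
    1 - Real.exp (-2 * α ^ 2 * n) ≤
      ∑ E : Finset (Fin n) with #E ≤ r, p ^ #E * (1 - p) ^ (n - #E) := by
  have htotal : ∑ E : Finset (Fin n), p ^ #E * (1 - p) ^ (n - #E) = 1 := by
    rw [Fin.sum_pow_mul_eq_add_pow, add_sub_cancel, one_pow]
  rw [← sum_filter_add_sum_filter_not univ (fun E => #E ≤ r)] at htotal
  simp only [not_le] at htotal
  linarith [sum_card_gt_pow_mul_pow_le (n := n) hp0 hp1 hα hr]

theorem stmt3_general {d : ℕ} (ν θ : Fin d → ℂ)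
    (hν : ∑ i, Complex.normSq (ν i) = 1) (hθ : ∑ i, Complex.normSq (θ i) = 1)
    (ε : ℝ)
    (hfid : 1 - ε ≤ ‖∑ i, (starRingEnd ℂ) (θ i) * ν i‖ ^ 2)
    (α : ℝ) (hα : 0 < α) (n : ℕ) (r : ℕ)
    (hr1 : (ε + α) * n ≤ r) :
    (Matrix.trace (hammProj n r ν * outer (tensorPow n θ))).im = 0 ∧
      1 - Real.exp (-2 * α ^ 2 * n) ≤
        (Matrix.trace (hammProj n r ν * outer (tensorPow n θ))).re := by
  set q := Complex.normSq (star θ ⬝ᵥ ν)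
  have hq0 : 0 ≤ q := Complex.normSq_nonneg _
  have hq1 : q ≤ 1 := by simpa [hθ, hν] using normSq_star_dotProduct_le θ ν
  have hqε : 1 - ε ≤ q := by rwa [Complex.sq_norm] at hfid
  have hr : (1 - q + α) * n ≤ r :=
    (mul_le_mul_of_nonneg_right (by linarith) n.cast_nonneg).trans hr1
  have hbound := one_sub_exp_le_sum_card_le_pow_mul_pow (by linarith) (by linarith) hα.le hr
  rw [sub_sub_cancel] at hbound
  rw [trace_hammProj_mul_outer_tensorPow n r ν θ hθ, Complex.ofReal_im, Complex.ofReal_re]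
  exact ⟨rfl, hbound⟩

/-- if `|⟨θ,ν⟩|² ≥ 1 − ε`, the i.i.d. state `θ^{⊗n}` is almost entirely
contained in the Hamming ball of radius `r ≥ (ε+α)n` around `ν^{⊗n}`. -/
theorem stmt3 {d : ℕ} (ν θ : Fin d → ℂ)
    (hν : ∑ i, Complex.normSq (ν i) = 1) (hθ : ∑ i, Complex.normSq (θ i) = 1)
    (ε : ℝ) (hε0 : 0 ≤ ε) (hε1 : ε ≤ 1)
    (hfid : 1 - ε ≤ ‖∑ i, (starRingEnd ℂ) (θ i) * ν i‖ ^ 2)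
    (α : ℝ) (hα : 0 < α) (n : ℕ) (hn : 1 ≤ n) (r : ℕ)
    (hr1 : (ε + α) * n ≤ r) (hr2 : r ≤ n) :
    (Matrix.trace (hammProj n r ν * outer (tensorPow n θ))).im = 0 ∧
      1 - Real.exp (-2 * α ^ 2 * n) ≤
        (Matrix.trace (hammProj n r ν * outer (tensorPow n θ))).re :=
  stmt3_general ν θ hν hθ ε hfid α hα n r hr1
end

section
/- Let 0 < ε ≤ 1/2, let n ≥ 1, let R be a finite type, set r = ⌊εn⌋, and let σ : R × (Fin n → Fin 2 × Fin 2) → ℂ be a unit vector satisfying (1_R ⊗ P^{r,Φ⁺})·σ = σ, where P^{r,Φ⁺} is the Hamming-ball projector on n subsystems of dimension 4 (indexed by Fin 2 × Fin 2) built from the EPR vector Φ⁺. Then the reduced matrix σ_S of σ on the S-components satisfies σ_S ≤ 2^{−(1−ε−h(ε))·n} · 1, i.e., 2^{−(1−ε−h(ε))n}·1 − σ_S is positive semidefinite. -/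
open Matrix ComplexOrder

/-- The EPR vector `Φ⁺` on `Fin 2 × Fin 2`. -/
noncomputable def EPR : Fin 2 × Fin 2 → ℂ :=
  fun p => if p.1 = p.2 then ((1 / Real.sqrt 2 : ℝ) : ℂ) else 0

/-- Reduced matrix on the `S`-components of a vector on `R × (Fin n → P × S)`. -/
noncomputable def redS {R P S : Type} [Fintype R] [Fintype P] {n : ℕ}
    (ψ : R × (Fin n → P × S) → ℂ) : Matrix (Fin n → S) (Fin n → S) ℂ :=
  Matrix.of fun s s' => ∑ ρ : R, ∑ p : Fin n → P,
    ψ (ρ, fun i => (p i, s i)) * (starRingEnd ℂ) (ψ (ρ, fun i => (p i, s' i)))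

/-- Binary entropy function. -/
noncomputable def binEnt (p : ℝ) : ℝ :=
  -p * Real.logb 2 p - (1 - p) * Real.logb 2 (1 - p)

/-!
Write `P_E` for the term of `hammProj` indexed by `E`: the tensor product of `1 - Φ⁺Φ⁺†` on `E`
and `Φ⁺Φ⁺†` off `E`. The `P_E` are Hermitian idempotents, so each slice `σ_ρ = σ(ρ, ·)` splits as
`∑_E P_E σ_ρ` with `∑_E ‖P_E σ_ρ‖² = ‖σ_ρ‖²`. Off `E` the vector `P_E σ_ρ` is a product of EPR
pairs, whose reduced state on `S` is maximally mixed, so pairing its `S`-part with a test vector `x`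
costs a factor `2^{-(n-|E|)}`. Cauchy–Schwarz with these weights gives
`⟨x, σ_S x⟩ ≤ (∑_{|E| ≤ εn} 2^{|E|-n}) ‖x‖²`, and since the Hamming ball of radius `εn` has at
most `2^{h(ε)n}` points, the sum is at most `2^{-(1-ε-h(ε))n}`.
-/

open Finset

section TensorPower

variable {κ ι α : Type*} [Fintype κ]

def Matrix.piKron [CommSemiring α] (M : κ → Matrix ι ι α) : Matrix (κ → ι) (κ → ι) α :=
  of fun x y => ∏ k, M k (x k) (y k)

theorem Matrix.piKron_mul [DecidableEq κ] [Fintype ι] [CommSemiring α] (A B : κ → Matrix ι ι α) :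
    piKron A * piKron B = piKron fun k => A k * B k := by
  ext x z
  simp only [piKron, mul_apply, of_apply, ← prod_mul_distrib, Fintype.prod_sum]

theorem Matrix.piKron_conjTranspose [CommSemiring α] [StarRing α] (A : κ → Matrix ι ι α) :
    (piKron A)ᴴ = piKron fun k => (A k)ᴴ := by
  ext x y
  simp [piKron]

end TensorPower

section Projectors

variable {ι : Type}

theorem outer_isHermitian (ν : ι → ℂ) : (outer ν).IsHermitian := by
  simp [outer, IsHermitian]

theorem isIdempotentElem_outer [Fintype ι] {ν : ι → ℂ} (hν : star ν ⬝ᵥ ν = 1) :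
    IsIdempotentElem (outer ν) := by
  simp [IsIdempotentElem, outer, vecMulVec_mul_vecMulVec, hν]

variable {κ : Type} [Fintype κ] [DecidableEq κ] [DecidableEq ι]

noncomputable def hammTerm (ν : ι → ℂ) (E : Finset κ) : Matrix (κ → ι) (κ → ι) ℂ :=
  piKron fun k => if k ∈ E then 1 - outer ν else outer ν

theorem hammProj_eq_sum [Fintype ι] (n r : ℕ) (ν : ι → ℂ) :
    hammProj n r ν = ∑ E : Finset (Fin n) with #E ≤ r, hammTerm ν E :=
  rfl

theorem hammTerm_isHermitian (ν : ι → ℂ) (E : Finset κ) : (hammTerm ν E).IsHermitian := by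
  rw [IsHermitian, hammTerm, piKron_conjTranspose]
  congr 1
  funext k
  split_ifs
  · exact isHermitian_one.sub (outer_isHermitian ν)
  · exact outer_isHermitian ν

theorem isIdempotentElem_hammTerm [Fintype ι] {ν : ι → ℂ} (hν : star ν ⬝ᵥ ν = 1)
    (E : Finset κ) : IsIdempotentElem (hammTerm ν E) := by
  rw [IsIdempotentElem, hammTerm, piKron_mul]
  congr 1
  funext k
  split_ifs
  · exact (isIdempotentElem_outer hν).one_sub
  · exact isIdempotentElem_outer hν

end Projectors

section QuadraticForms

variable {m β : Type*} [Fintype m]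

theorem star_dotProduct_self_eq_sum_normSq (v : m → ℂ) :
    star v ⬝ᵥ v = ((∑ i, Complex.normSq (v i) : ℝ) : ℂ) := by
  simp [dotProduct, Complex.normSq_eq_conj_mul_self]

theorem star_mulVec_dotProduct_mulVec_of_isIdempotentElem {P : Matrix m m ℂ} (hH : P.IsHermitian)
    (hI : IsIdempotentElem P) (v : m → ℂ) :
    star (P *ᵥ v) ⬝ᵥ (P *ᵥ v) = star v ⬝ᵥ (P *ᵥ v) := by
  rw [star_mulVec, ← dotProduct_mulVec, mulVec_mulVec, hH.eq, hI.eq]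

theorem sum_normSq_mulVec_eq_of_sum_mulVec_eq {s : Finset β} {P : β → Matrix m m ℂ}
    (hH : ∀ j ∈ s, (P j).IsHermitian) (hI : ∀ j ∈ s, IsIdempotentElem (P j)) {v : m → ℂ}
    (hv : ∑ j ∈ s, P j *ᵥ v = v) :
    ∑ j ∈ s, ∑ i, Complex.normSq ((P j *ᵥ v) i) = ∑ i, Complex.normSq (v i) := by
  apply Complex.ofReal_injective
  rw [Complex.ofReal_sum]
  simp_rw [← star_dotProduct_self_eq_sum_normSq]
  rw [sum_congr rfl fun j hj =>
      star_mulVec_dotProduct_mulVec_of_isIdempotentElem (hH j hj) (hI j hj) v,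
    ← dotProduct_sum, hv]

theorem posSemidef_smul_one_sub_mul_conjTranspose_self {l : Type*} [Fintype l] [DecidableEq m]
    {M : Matrix m l ℂ} {c : ℝ}
    (h : ∀ x, ∑ j, Complex.normSq ((Mᴴ *ᵥ x) j) ≤ c * ∑ i, Complex.normSq (x i)) :
    (c • (1 : Matrix m m ℂ) - M * Mᴴ).PosSemidef := by
  rw [posSemidef_iff_dotProduct_mulVec]
  refine ⟨(isHermitian_one.smul (IsSelfAdjoint.all c)).sub (isHermitian_mul_conjTranspose_self M),
    fun x => ?_⟩
  have hstar : star x ᵥ* M = star (Mᴴ *ᵥ x) := by rw [star_mulVec, conjTranspose_conjTranspose]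
  rw [sub_mulVec, dotProduct_sub, smul_mulVec, one_mulVec, dotProduct_smul, ← mulVec_mulVec,
    dotProduct_mulVec, hstar, star_dotProduct_self_eq_sum_normSq,
    star_dotProduct_self_eq_sum_normSq, Complex.real_smul, ← Complex.ofReal_mul,
    ← Complex.ofReal_sub, Complex.zero_le_real]
  linarith [h x]

end QuadraticForms

section CauchySchwarz

variable {ι β : Type*}

theorem normSq_sum_le_of_le_mul (s : Finset ι) (f : ι → ℂ) {r t : ι → ℝ}
    (hr : ∀ i ∈ s, 0 ≤ r i) (ht : ∀ i ∈ s, 0 ≤ t i)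
    (h : ∀ i ∈ s, Complex.normSq (f i) ≤ r i * t i) :
    Complex.normSq (∑ i ∈ s, f i) ≤ (∑ i ∈ s, r i) * ∑ i ∈ s, t i := by
  rw [← Complex.sq_norm]
  calc ‖∑ i ∈ s, f i‖ ^ 2 ≤ (∑ i ∈ s, ‖f i‖) ^ 2 :=
        pow_le_pow_left₀ (norm_nonneg _) (norm_sum_le _ _) 2
    _ ≤ _ := sum_sq_le_sum_mul_sum_of_sq_le_mul s hr ht fun i hi => by
        rw [Complex.sq_norm]; exact h i hi

theorem normSq_sum_mul_le [Fintype ι] (f g : ι → ℂ) :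
    Complex.normSq (∑ i, f i * g i)
      ≤ (∑ i, Complex.normSq (f i)) * ∑ i, Complex.normSq (g i) :=
  normSq_sum_le_of_le_mul _ _ (fun _ _ => Complex.normSq_nonneg _)
    (fun _ _ => Complex.normSq_nonneg _) fun _ _ => (Complex.normSq_mul _ _).le

theorem sum_normSq_sum_le [Fintype β] (s : Finset ι) {w : ι → ℝ} (hw : ∀ i ∈ s, 0 < w i)
    (v : ι → β → ℂ) :
    ∑ b, Complex.normSq (∑ i ∈ s, v i b)
      ≤ (∑ i ∈ s, w i) * ∑ i ∈ s, (∑ b, Complex.normSq (v i b)) / w i := by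
  have hb : ∀ b, Complex.normSq (∑ i ∈ s, v i b)
      ≤ (∑ i ∈ s, w i) * ∑ i ∈ s, Complex.normSq (v i b) / w i := fun b =>
    normSq_sum_le_of_le_mul s _ (fun i hi => (hw i hi).le)
      (fun i hi => div_nonneg (Complex.normSq_nonneg _) (hw i hi).le)
      fun i hi => (mul_div_cancel₀ _ (hw i hi).ne').ge
  refine (sum_le_sum fun b _ => hb b).trans_eq ?_
  simp_rw [← mul_sum, sum_div]
  rw [sum_comm]

end CauchySchwarz

section Splitting

variable {κ : Type*} [DecidableEq κ]

abbrev splitEquiv (E : Finset κ) (β : Type*) : (κ → β) ≃ ({k // k ∈ E} → β) × ({k // k ∉ E} → β) :=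
  Equiv.piEquivPiSubtypeProd (· ∈ E) fun _ => β

theorem sum_splitEquiv [Fintype κ] {β M : Type*} [Fintype β] [AddCommMonoid M] (E : Finset κ)
    (F : (κ → β) → M) :
    ∑ f, F f = ∑ a, ∑ b, F ((splitEquiv E β).symm (a, b)) :=
  ((splitEquiv E β).symm.sum_comp F).symm.trans (Fintype.sum_prod_type _)

theorem prod_eq_prod_mem_mul_prod_notMem [Fintype κ] {M : Type*} [CommMonoid M] (E : Finset κ)
    (f : κ → M) :
    ∏ k, f k = (∏ k : {k // k ∈ E}, f k) * ∏ k : {k // k ∉ E}, f k := by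
  rw [← prod_mul_prod_compl E f, prod_coe_sort E, prod_subtype Eᶜ (fun _ => mem_compl)]

theorem splitEquiv_symm_pair {E : Finset κ} {β γ : Type*} (a : {k // k ∈ E} → β)
    (b : {k // k ∉ E} → β) (c : {k // k ∈ E} → γ) (d : {k // k ∉ E} → γ) :
    (fun k => ((splitEquiv E β).symm (a, b) k, (splitEquiv E γ).symm (c, d) k))
      = (splitEquiv E (β × γ)).symm (fun j => (a j, c j), fun j => (b j, d j)) := by
  funext k
  by_cases hk : k ∈ E <;> simp [hk]

theorem exists_piKron_mulVec_splitEquiv_eq [Fintype κ] {E : Finset κ} {ι : Type} [Fintype ι]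
    (ν : ι → ℂ) {q : κ → Matrix ι ι ℂ} (hq : ∀ k ∉ E, q k = outer ν) (w : (κ → ι) → ℂ) :
    ∃ ζ : ({k // k ∈ E} → ι) → ℂ, ∀ a b,
      (piKron q *ᵥ w) ((splitEquiv E ι).symm (a, b)) = ζ a * ∏ k, ν (b k) := by
  refine ⟨fun a => ∑ y, (∏ k : {k // k ∈ E}, q k (a k) (y k))
    * (∏ k : {k // k ∉ E}, star (ν (y k))) * w y, fun a b => ?_⟩
  simp only [mulVec, dotProduct, piKron, of_apply, sum_mul]
  refine sum_congr rfl fun y _ => ?_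
  have hin : ∏ k : {k // k ∈ E}, q k ((splitEquiv E ι).symm (a, b) k) (y k)
      = ∏ k : {k // k ∈ E}, q k (a k) (y k) :=
    prod_congr rfl fun k _ => by simp [k.2]
  have hout : ∏ k : {k // k ∉ E}, q k ((splitEquiv E ι).symm (a, b) k) (y k)
      = (∏ k, ν (b k)) * ∏ k : {k // k ∉ E}, star (ν (y k)) := by
    rw [← prod_mul_distrib]
    refine prod_congr rfl fun k _ => ?_
    simp [hq k k.2, outer, vecMulVec_apply, k.2]
  rw [prod_eq_prod_mem_mul_prod_notMem E, hin, hout]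
  ring

theorem sum_arrow_prod_mk [Fintype κ] {β γ M : Type*} [Fintype β] [Fintype γ] [AddCommMonoid M]
    (F : (κ → β × γ) → M) :
    ∑ a : κ → β, ∑ c : κ → γ, F (fun j => (a j, c j)) = ∑ y, F y := by
  rw [← Fintype.sum_prod_type', ← (Equiv.arrowProdEquivProdArrow _ _ _).symm.sum_comp]
  rfl

end Splitting

section PartialInner

variable {κ : Type*} [Fintype κ] [DecidableEq κ]

def partialInner {P S : Type*} [Fintype S] (z : (κ → P × S) → ℂ) (x : (κ → S) → ℂ)
    (p : κ → P) : ℂ :=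
  ∑ s, star (z fun k => (p k, s k)) * x s

theorem partialInner_sum {P S β : Type*} [Fintype S] (t : Finset β) (z : β → (κ → P × S) → ℂ)
    (x : (κ → S) → ℂ) :
    partialInner (∑ j ∈ t, z j) x = ∑ j ∈ t, partialInner (z j) x := by
  funext p
  simp only [partialInner, Finset.sum_apply, star_sum, sum_mul]
  exact sum_comm

end PartialInner

section EPR

theorem sum_normSq_EPR : ∑ q, Complex.normSq (EPR q) = 1 := by
  norm_num [EPR, Fintype.sum_prod_type, Fin.sum_univ_two]

theorem star_EPR_dotProduct_self : star EPR ⬝ᵥ EPR = 1 := by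
  rw [star_dotProduct_self_eq_sum_normSq, sum_normSq_EPR, Complex.ofReal_one]

theorem prod_EPR_pair_eq {β : Type*} [Fintype β] (b d : β → Fin 2) :
    ∏ j, EPR (b j, d j) = if b = d then (((√2)⁻¹ ^ Fintype.card β : ℝ) : ℂ) else 0 := by
  split_ifs with h
  · simp [h, EPR, prod_const]
  · obtain ⟨j, hj⟩ := Function.ne_iff.mp h
    exact prod_eq_zero (mem_univ j) (if_neg hj)

variable {κ : Type*} [Fintype κ] [DecidableEq κ] {E : Finset κ} {z : (κ → Fin 2 × Fin 2) → ℂ}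
  {ζ : ({k // k ∈ E} → Fin 2 × Fin 2) → ℂ}

theorem sum_normSq_eq_of_eq_mul_prod_EPR
    (hz : ∀ a b, z ((splitEquiv E _).symm (a, b)) = ζ a * ∏ k, EPR (b k)) :
    ∑ y, Complex.normSq (z y) = ∑ a, Complex.normSq (ζ a) := by
  rw [sum_splitEquiv E]
  refine sum_congr rfl fun a _ => ?_
  simp_rw [hz, Complex.normSq_mul, ← mul_sum, map_prod]
  rw [← Fintype.prod_sum fun _ q => Complex.normSq (EPR q)]
  simp [sum_normSq_EPR]

theorem partialInner_splitEquiv_symm_of_eq_mul_prod_EPR (x : (κ → Fin 2) → ℂ)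
    (hz : ∀ a b, z ((splitEquiv E _).symm (a, b)) = ζ a * ∏ k, EPR (b k))
    (a : {k // k ∈ E} → Fin 2) (b : {k // k ∉ E} → Fin 2) :
    partialInner z x ((splitEquiv E _).symm (a, b))
      = (((√2)⁻¹ ^ Fintype.card {k // k ∉ E} : ℝ) : ℂ)
        * ∑ s', star (ζ fun j => (a j, s' j)) * x ((splitEquiv E _).symm (s', b)) := by
  rw [partialInner, sum_splitEquiv E, mul_sum]
  refine sum_congr rfl fun s' _ => ?_
  simp_rw [splitEquiv_symm_pair, hz, prod_EPR_pair_eq]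
  simp only [mul_ite, mul_zero, star_mul', ite_mul, zero_mul, star_zero, apply_ite star,
    sum_ite_eq, mem_univ, if_true, Complex.star_def, Complex.conj_ofReal]
  ring

theorem sum_normSq_partialInner_le_of_eq_mul_prod_EPR (x : (κ → Fin 2) → ℂ)
    (hz : ∀ a b, z ((splitEquiv E _).symm (a, b)) = ζ a * ∏ k, EPR (b k)) :
    ∑ p, Complex.normSq (partialInner z x p)
      ≤ 2⁻¹ ^ Fintype.card {k // k ∉ E} * (∑ s, Complex.normSq (x s))
        * ∑ y, Complex.normSq (z y) := by
  set c : ℝ := (√2)⁻¹ ^ Fintype.card {k // k ∉ E}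
  have hc : Complex.normSq c = 2⁻¹ ^ Fintype.card {k // k ∉ E} := by
    rw [Complex.normSq_ofReal, ← mul_pow, ← mul_inv, Real.mul_self_sqrt zero_le_two]
  have hx : ∑ b : {k // k ∉ E} → Fin 2, ∑ s' : {k // k ∈ E} → Fin 2,
      Complex.normSq (x ((splitEquiv E _).symm (s', b))) = ∑ s, Complex.normSq (x s) := by
    rw [sum_comm, sum_splitEquiv E]
  calc ∑ p, Complex.normSq (partialInner z x p)
      = ∑ a : {k // k ∈ E} → Fin 2, ∑ b : {k // k ∉ E} → Fin 2, Complex.normSq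
          (c * ∑ s' : {k // k ∈ E} → Fin 2,
            star (ζ fun j => (a j, s' j)) * x ((splitEquiv E _).symm (s', b))) := by
        rw [sum_splitEquiv E]
        simp_rw [partialInner_splitEquiv_symm_of_eq_mul_prod_EPR x hz]
        rfl
    _ ≤ ∑ a : {k // k ∈ E} → Fin 2, ∑ b : {k // k ∉ E} → Fin 2, Complex.normSq c
          * ((∑ s' : {k // k ∈ E} → Fin 2, Complex.normSq (ζ fun j => (a j, s' j)))
            * ∑ s' : {k // k ∈ E} → Fin 2,
              Complex.normSq (x ((splitEquiv E _).symm (s', b)))) := by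
        gcongr with a _ b _
        rw [Complex.normSq_mul]
        refine mul_le_mul_of_nonneg_left ?_ (Complex.normSq_nonneg _)
        refine (normSq_sum_mul_le _ _).trans_eq ?_
        simp_rw [Complex.star_def, Complex.normSq_conj]
    _ = Complex.normSq c * (∑ s, Complex.normSq (x s)) * ∑ a, Complex.normSq (ζ a) := by
        rw [← sum_arrow_prod_mk, ← hx, mul_assoc, mul_comm (∑ b, _), sum_mul_sum, mul_sum]
        refine sum_congr rfl fun a _ => ?_
        rw [mul_sum]
    _ = _ := by rw [hc, sum_normSq_eq_of_eq_mul_prod_EPR hz]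

end EPR

section HammingBallVolume

variable {ε : ℝ}

theorem two_rpow_neg_binEnt_mul_le (hε0 : 0 < ε) (hε1 : ε ≤ 1 / 2) {n k : ℕ} (hkn : k ≤ n)
    (hk : (k : ℝ) ≤ ε * n) :
    (2 : ℝ) ^ (-(binEnt ε * n)) ≤ ε ^ k * (1 - ε) ^ (n - k) := by
  have h1ε : 0 < 1 - ε := by linarith
  set t := ε / (1 - ε)
  have hgeom : ∀ x : ℝ, ε ^ x * (1 - ε) ^ ((n : ℝ) - x) = (1 - ε) ^ (n : ℝ) * t ^ x := by
    intro x
    rw [Real.div_rpow hε0.le h1ε.le, Real.rpow_sub h1ε]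
    field_simp
  have hent : (2 : ℝ) ^ (-(binEnt ε * n)) = ε ^ (ε * n) * (1 - ε) ^ ((n : ℝ) - ε * n) := by
    rw [show -(binEnt ε * n) = Real.logb 2 ε * (ε * n) + Real.logb 2 (1 - ε) * (n - ε * n) by
        unfold binEnt; ring,
      Real.rpow_add two_pos, Real.rpow_mul zero_le_two, Real.rpow_mul zero_le_two,
      Real.rpow_logb two_pos (by norm_num) hε0, Real.rpow_logb two_pos (by norm_num) h1ε]
  rw [hent, ← Real.rpow_natCast, ← Real.rpow_natCast, Nat.cast_sub hkn, hgeom, hgeom]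
  exact mul_le_mul_of_nonneg_left (Real.rpow_le_rpow_of_exponent_ge (by positivity)
    ((div_le_one h1ε).mpr (by linarith)) hk) (by positivity)

theorem card_hammingBall_le (hε0 : 0 < ε) (hε1 : ε ≤ 1 / 2) {n r : ℕ} (hr : (r : ℝ) ≤ ε * n) :
    (#{E : Finset (Fin n) | #E ≤ r} : ℝ) ≤ 2 ^ (binEnt ε * n) := by
  have hrn : r ≤ n := by
    have : (r : ℝ) ≤ n := by nlinarith [(n.cast_nonneg : (0 : ℝ) ≤ n)]
    exact_mod_cast this
  rw [← one_mul ((2 : ℝ) ^ (binEnt ε * n)), ← mul_inv_le_iff₀ (by positivity),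
    ← Real.rpow_neg zero_le_two]
  calc (#{E : Finset (Fin n) | #E ≤ r} : ℝ) * 2 ^ (-(binEnt ε * n))
      = ∑ E : Finset (Fin n) with #E ≤ r, 2 ^ (-(binEnt ε * n)) := by
        rw [sum_const, nsmul_eq_mul]
    _ ≤ ∑ E : Finset (Fin n) with #E ≤ r, ε ^ #E * (1 - ε) ^ (n - #E) := by
        refine sum_le_sum fun E hE => ?_
        have hE : #E ≤ r := (mem_filter.mp hE).2
        exact two_rpow_neg_binEnt_mul_le hε0 hε1 (hE.trans hrn) ((Nat.cast_le.mpr hE).trans hr)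
    _ ≤ ∑ E : Finset (Fin n), ε ^ #E * (1 - ε) ^ (n - #E) :=
        sum_le_sum_of_subset_of_nonneg (filter_subset _ _) fun E _ _ => by
          have : 0 ≤ 1 - ε := by linarith
          positivity
    _ = 1 := by rw [Fin.sum_pow_mul_eq_add_pow, add_sub_cancel, one_pow]

theorem sum_hammingBall_weight_le (hε0 : 0 < ε) (hε1 : ε ≤ 1 / 2) (n : ℕ) :
    ∑ E : Finset (Fin n) with #E ≤ ⌊ε * n⌋₊, (2⁻¹ : ℝ) ^ (n - #E)
      ≤ 2 ^ (-(1 - ε - binEnt ε) * n) := by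
  have hr : (⌊ε * n⌋₊ : ℝ) ≤ ε * n := Nat.floor_le (by positivity)
  have hterm : ∀ E ∈ ({E : Finset (Fin n) | #E ≤ ⌊ε * n⌋₊} : Finset _),
      (2⁻¹ : ℝ) ^ (n - #E) ≤ 2 ^ (ε * n) / 2 ^ n := by
    intro E hE
    have hEn : #E ≤ n := by simpa using card_le_univ E
    rw [inv_pow, pow_sub₀ _ two_ne_zero hEn, mul_inv, inv_inv, mul_comm, ← div_eq_mul_inv]
    gcongr
    rw [← Real.rpow_natCast]
    exact Real.rpow_le_rpow_of_exponent_le one_le_two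
      ((Nat.cast_le.mpr (mem_filter.mp hE).2).trans hr)
  calc ∑ E : Finset (Fin n) with #E ≤ ⌊ε * n⌋₊, (2⁻¹ : ℝ) ^ (n - #E)
      ≤ #{E : Finset (Fin n) | #E ≤ ⌊ε * n⌋₊} * (2 ^ (ε * n) / 2 ^ n) := by
        rw [← nsmul_eq_mul, ← sum_const]
        exact sum_le_sum hterm
    _ ≤ 2 ^ (binEnt ε * n) * (2 ^ (ε * n) / 2 ^ n) := by
        gcongr
        exact card_hammingBall_le hε0 hε1 hr
    _ = 2 ^ (-(1 - ε - binEnt ε) * n) := by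
        rw [← Real.rpow_natCast, mul_div_assoc', ← Real.rpow_add two_pos,
          ← Real.rpow_sub two_pos]
        ring_nf

end HammingBallVolume

section HammingBallStates

theorem card_subtype_notMem {n : ℕ} (E : Finset (Fin n)) :
    Fintype.card {k // k ∉ E} = n - #E := by
  simp [Fintype.card_subtype_compl]

theorem sum_normSq_partialInner_le_of_hammProj {n r : ℕ} (x : (Fin n → Fin 2) → ℂ)
    {v : (Fin n → Fin 2 × Fin 2) → ℂ} (hv : hammProj n r EPR *ᵥ v = v) :
    ∑ p, Complex.normSq (partialInner v x p)
      ≤ (∑ E : Finset (Fin n) with #E ≤ r, (2⁻¹ : ℝ) ^ (n - #E))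
        * (∑ s, Complex.normSq (x s)) * ∑ y, Complex.normSq (v y) := by
  set ball : Finset (Finset (Fin n)) := {E | #E ≤ r}
  have hdecomp : ∑ E ∈ ball, hammTerm EPR E *ᵥ v = v := by
    rw [← sum_mulVec, ← hammProj_eq_sum, hv]
  have hpyth := sum_normSq_mulVec_eq_of_sum_mulVec_eq (fun E _ => hammTerm_isHermitian EPR E)
    (fun E _ => isIdempotentElem_hammTerm star_EPR_dotProduct_self E) hdecomp
  have hlocal : ∀ E : Finset (Fin n), ∑ p, Complex.normSq (partialInner (hammTerm EPR E *ᵥ v) x p)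
      ≤ (2⁻¹ : ℝ) ^ (n - #E) * ((∑ s, Complex.normSq (x s))
        * ∑ y, Complex.normSq ((hammTerm EPR E *ᵥ v) y)) := by
    intro E
    obtain ⟨ζ, hζ⟩ := exists_piKron_mulVec_splitEquiv_eq EPR (fun k hk => if_neg hk) v
    rw [← card_subtype_notMem, ← mul_assoc]
    exact sum_normSq_partialInner_le_of_eq_mul_prod_EPR x hζ
  calc ∑ p, Complex.normSq (partialInner v x p)
      = ∑ p, Complex.normSq (∑ E ∈ ball, partialInner (hammTerm EPR E *ᵥ v) x p) := by
        conv_lhs => rw [← hdecomp, partialInner_sum]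
        simp only [Finset.sum_apply]
    _ ≤ (∑ E ∈ ball, (2⁻¹ : ℝ) ^ (n - #E)) * ∑ E ∈ ball,
          (∑ p, Complex.normSq (partialInner (hammTerm EPR E *ᵥ v) x p)) / 2⁻¹ ^ (n - #E) :=
        sum_normSq_sum_le ball (fun E _ => by positivity) _
    _ ≤ (∑ E ∈ ball, (2⁻¹ : ℝ) ^ (n - #E)) * ∑ E ∈ ball,
          (∑ s, Complex.normSq (x s)) * ∑ y, Complex.normSq ((hammTerm EPR E *ᵥ v) y) := by
        gcongr with E
        rw [div_le_iff₀' (by positivity)]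
        exact hlocal E
    _ = _ := by rw [← mul_sum, hpyth, mul_assoc]

end HammingBallStates

section ReducedMatrix

variable {R P S : Type} {n : ℕ}

def redSFactor (ψ : R × (Fin n → P × S) → ℂ) : Matrix (Fin n → S) (R × (Fin n → P)) ℂ :=
  of fun s c => ψ (c.1, fun i => (c.2 i, s i))

theorem redS_eq_mul_conjTranspose [Fintype R] [Fintype P] (ψ : R × (Fin n → P × S) → ℂ) :
    redS ψ = redSFactor ψ * (redSFactor ψ)ᴴ := by
  ext s s'
  simp [redS, redSFactor, mul_apply, Fintype.sum_prod_type]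

theorem conjTranspose_redSFactor_mulVec [Fintype S] (ψ : R × (Fin n → P × S) → ℂ)
    (x : (Fin n → S) → ℂ) (c : R × (Fin n → P)) :
    ((redSFactor ψ)ᴴ *ᵥ x) c = partialInner (fun y => ψ (c.1, y)) x c.2 :=
  rfl

end ReducedMatrix

theorem stmt6_general (ε : ℝ) (hε0 : 0 < ε) (hε1 : ε ≤ 1 / 2) (n : ℕ)
    (R : Type) [Fintype R]
    (σ : R × (Fin n → Fin 2 × Fin 2) → ℂ)
    (hunit : ∑ z, Complex.normSq (σ z) = 1)
    (hproj : ∀ (ρ : R) (x : Fin n → Fin 2 × Fin 2),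
      ∑ y, hammProj n ⌊ε * n⌋₊ EPR x y * σ (ρ, y) = σ (ρ, x)) :
    (((2 : ℝ) ^ (-(1 - ε - binEnt ε) * (n : ℝ))) •
        (1 : Matrix (Fin n → Fin 2) (Fin n → Fin 2) ℂ) - redS σ).PosSemidef := by
  rw [redS_eq_mul_conjTranspose]
  refine posSemidef_smul_one_sub_mul_conjTranspose_self fun x => ?_
  calc ∑ c, Complex.normSq (((redSFactor σ)ᴴ *ᵥ x) c)
      = ∑ ρ, ∑ p, Complex.normSq (partialInner (fun y => σ (ρ, y)) x p) := by
        simp_rw [conjTranspose_redSFactor_mulVec, Fintype.sum_prod_type]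
    _ ≤ ∑ ρ, (∑ E : Finset (Fin n) with #E ≤ ⌊ε * n⌋₊, (2⁻¹ : ℝ) ^ (n - #E))
          * (∑ s, Complex.normSq (x s)) * ∑ y, Complex.normSq (σ (ρ, y)) :=
        sum_le_sum fun ρ _ => sum_normSq_partialInner_le_of_hammProj x (funext (hproj ρ))
    _ = (∑ E : Finset (Fin n) with #E ≤ ⌊ε * n⌋₊, (2⁻¹ : ℝ) ^ (n - #E))
          * ∑ s, Complex.normSq (x s) := by
        rw [← mul_sum, ← Fintype.sum_prod_type', hunit, mul_one]
    _ ≤ _ := mul_le_mul_of_nonneg_right (sum_hammingBall_weight_le hε0 hε1 n)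
        (sum_nonneg fun s _ => Complex.normSq_nonneg (x s))

/-- a unit vector supported in the Hamming ball of radius `⌊εn⌋`
around `(Φ⁺)^{⊗n}` has reduced state on `S` bounded by `2^{−(1−ε−h(ε))n}·1`. -/
theorem stmt6 (ε : ℝ) (hε0 : 0 < ε) (hε1 : ε ≤ 1 / 2) (n : ℕ) (hn : 1 ≤ n)
    (R : Type) [Fintype R]
    (σ : R × (Fin n → Fin 2 × Fin 2) → ℂ)
    (hunit : ∑ z, Complex.normSq (σ z) = 1)
    (hproj : ∀ (ρ : R) (x : Fin n → Fin 2 × Fin 2),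
      ∑ y, hammProj n ⌊ε * n⌋₊ EPR x y * σ (ρ, y) = σ (ρ, x)) :
    (((2 : ℝ) ^ (-(1 - ε - binEnt ε) * (n : ℝ))) •
        (1 : Matrix (Fin n → Fin 2) (Fin n → Fin 2) ℂ) - redS σ).PosSemidef :=
  stmt6_general ε hε0 hε1 n R σ hunit hproj
end
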